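/- Let T_p > 0 and define k(t) = sec²(πt/(2T_p)) for t ∈ [0, T_p). Let E be a finite-dimensional real normed vector space, let x : [0, T_p) → E, let M > 0 and θ > 0, and let V : [0, T_p) → ℝ be differentiable with V(t) ≥ M·‖x(t)‖² for all t ∈ [0, T_p) and V'(t) ≤ −θ·k(t)·V(t) for all t ∈ [0, T_p). Then x(t) → 0 as t → T_p from the left; i.e., x is prescribed-time stable to the origin at time T_p. -/

import Mathlib

open Real Set Filter Topology

/-!
The gain `k(t) = sec²(πt/(2T_p))` has the antiderivative `(2T_p/π) tan(πt/(2T_p))`, so with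
`A(t) = θ (2T_p/π) tan(πt/(2T_p))` the integrating factor `exp A` makes `V · exp A` nonincreasing.
Hence `M‖x(t)‖² ≤ V(t) ≤ V(0) exp(A(0) - A(t))`, and the right-hand side tends to `0` as
`t → T_p⁻` because the tangent blows up at `π/2`.
-/

theorem antitoneOn_mul_exp_of_hasDerivWithinAt_le {s : Set ℝ} (hs : Convex ℝ s)
    {V V' A a : ℝ → ℝ} (hV : ∀ t ∈ s, HasDerivWithinAt V (V' t) s t)
    (hA : ∀ t ∈ s, HasDerivAt A (a t) t) (h : ∀ t ∈ s, V' t ≤ -a t * V t) :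
    AntitoneOn (fun t => V t * exp (A t)) s := by
  refine antitoneOn_of_hasDerivWithinAt_nonpos hs
    (fun t ht => (hV t ht).continuousWithinAt.mul (hA t ht).exp.continuousAt.continuousWithinAt)
    (f' := fun t => V' t * exp (A t) + V t * (exp (A t) * a t))
    (fun t ht => ((hV t (interior_subset ht)).mono interior_subset).mul
      (hA t (interior_subset ht)).exp.hasDerivWithinAt) fun t ht => ?_
  have hsum : V' t + V t * a t ≤ 0 := by linarith [h t (interior_subset ht)]
  linarith [mul_nonpos_of_nonpos_of_nonneg hsum (exp_pos (A t)).le]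

theorem le_mul_exp_of_hasDerivWithinAt_le {s : Set ℝ} (hs : Convex ℝ s)
    {V V' A a : ℝ → ℝ} (hV : ∀ t ∈ s, HasDerivWithinAt V (V' t) s t)
    (hA : ∀ t ∈ s, HasDerivAt A (a t) t) (h : ∀ t ∈ s, V' t ≤ -a t * V t)
    {t₀ t : ℝ} (ht₀ : t₀ ∈ s) (ht : t ∈ s) (hle : t₀ ≤ t) :
    V t ≤ V t₀ * exp (A t₀ - A t) := by
  have key := antitoneOn_mul_exp_of_hasDerivWithinAt_le hs hV hA h ht₀ ht hle
  calc V t = V t * exp (A t) * exp (-A t) := by rw [mul_assoc, ← exp_add]; simp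
    _ ≤ V t₀ * exp (A t₀) * exp (-A t) := by gcongr
    _ = V t₀ * exp (A t₀ - A t) := by rw [mul_assoc, ← exp_add, sub_eq_add_neg]

theorem cos_pi_mul_div_pos {T t : ℝ} (ht : t ∈ Ico 0 T) : 0 < cos (π * t / (2 * T)) := by
  have hT : 0 < T := ht.1.trans_lt ht.2
  apply cos_pos_of_mem_Ioo
  constructor
  · have : 0 ≤ π * t / (2 * T) := by have := ht.1; positivity
    linarith [pi_pos]
  · rw [div_lt_iff₀ (by positivity)]
    nlinarith [pi_pos, ht.2]

theorem hasDerivAt_tan_pi_mul_div {T t : ℝ} (hT : T ≠ 0) (ht : cos (π * t / (2 * T)) ≠ 0) :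
    HasDerivAt (fun s => 2 * T / π * tan (π * s / (2 * T))) (1 / cos (π * t / (2 * T)) ^ 2) t := by
  have hlin : HasDerivAt (fun s => π * s / (2 * T)) (π / (2 * T)) t := by
    simpa using ((hasDerivAt_id t).const_mul π).div_const (2 * T)
  refine (((hasDerivAt_tan ht).comp t hlin).const_mul (2 * T / π)).congr_deriv ?_
  field_simp

theorem tendsto_tan_pi_mul_div_atTop {T : ℝ} (hT : 0 < T) :
    Tendsto (fun t => tan (π * t / (2 * T))) (𝓝[<] T) atTop := by
  refine tendsto_tan_pi_div_two.comp (tendsto_nhdsWithin_of_tendsto_nhds_of_eventually_within _ ?_ ?_)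
  · have : π * T / (2 * T) = π / 2 := by field_simp
    rw [← this]
    exact ((continuous_const.mul continuous_id).div_const _).tendsto T |>.mono_left nhdsWithin_le_nhds
  · filter_upwards [self_mem_nhdsWithin] with t (ht : t < T)
    rw [mem_Iio, div_lt_div_iff₀ (by positivity) two_pos]
    nlinarith [pi_pos]

theorem tendsto_zero_of_mul_norm_sq_le {α E : Type*} [NormedAddCommGroup E] {l : Filter α}
    {x : α → E} {u : α → ℝ} {M : ℝ} (hM : 0 < M) (hx : ∀ᶠ t in l, M * ‖x t‖ ^ 2 ≤ u t)
    (hu : Tendsto u l (𝓝 0)) : Tendsto x l (𝓝 0) := by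
  refine squeeze_zero_norm' (a := fun t => √(u t / M)) ?_ ?_
  · filter_upwards [hx] with t ht
    simpa only [abs_norm] using abs_le_sqrt ((le_div_iff₀' hM).mpr ht)
  · simpa using (hu.div_const M).sqrt

theorem stmt2_general {E : Type*} [NormedAddCommGroup E]
    (Tp : ℝ) (hTp : 0 < Tp) (M θ : ℝ) (hM : 0 < M) (hθ : 0 < θ)
    (x : ℝ → E) (V V' : ℝ → ℝ)
    (hVx : ∀ t ∈ Ico (0 : ℝ) Tp, M * ‖x t‖ ^ 2 ≤ V t)
    (hV : ∀ t ∈ Ico (0 : ℝ) Tp, HasDerivWithinAt V (V' t) (Ico 0 Tp) t)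
    (hV' : ∀ t ∈ Ico (0 : ℝ) Tp, V' t ≤ -θ * (1 / cos (π * t / (2 * Tp)) ^ 2) * V t) :
    Tendsto x (nhdsWithin Tp (Iio Tp)) (nhds 0) := by
  set A : ℝ → ℝ := fun t => θ * (2 * Tp / π * tan (π * t / (2 * Tp)))
  have hA : ∀ t ∈ Ico 0 Tp, HasDerivAt A (θ * (1 / cos (π * t / (2 * Tp)) ^ 2)) t := fun t ht =>
    (hasDerivAt_tan_pi_mul_div hTp.ne' (cos_pi_mul_div_pos ht).ne').const_mul θ
  have h0 : (0 : ℝ) ∈ Ico 0 Tp := ⟨le_rfl, hTp⟩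
  have hbound : ∀ t ∈ Ico 0 Tp, M * ‖x t‖ ^ 2 ≤ V 0 * exp (A 0 - A t) := fun t ht =>
    (hVx t ht).trans (le_mul_exp_of_hasDerivWithinAt_le (convex_Ico 0 Tp) hV hA
      (fun t ht => (hV' t ht).trans_eq (by ring)) h0 ht ht.1)
  have hA_top : Tendsto A (𝓝[<] Tp) atTop :=
    ((tendsto_tan_pi_mul_div_atTop hTp).const_mul_atTop (by positivity)).const_mul_atTop hθ
  have hdecay : Tendsto (fun t => V 0 * exp (A 0 - A t)) (𝓝[<] Tp) (𝓝 0) := by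
    have hexp := tendsto_exp_atBot.comp
      (tendsto_atBot_add_const_left _ (A 0) (tendsto_neg_atTop_atBot.comp hA_top))
    simpa [sub_eq_add_neg] using hexp.const_mul (V 0)
  refine tendsto_zero_of_mul_norm_sq_le hM ?_ hdecay
  filter_upwards [Ioo_mem_nhdsLT hTp] with t ht
  exact hbound t (Ioo_subset_Ico_self ht)

/-- Corollary 1, prescribed-time stability via a Lyapunov function.
If `V(t) ≥ M‖x(t)‖²` and `V'(t) ≤ -θ k(t) V(t)` on `[0, T_p)` with
`k(t) = sec²(π t/(2T_p))`, `M, θ > 0`, then `x(t) → 0` as `t → T_p⁻`. -/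
theorem stmt2 {E : Type*} [NormedAddCommGroup E] [NormedSpace ℝ E] [FiniteDimensional ℝ E]
    (Tp : ℝ) (hTp : 0 < Tp) (M θ : ℝ) (hM : 0 < M) (hθ : 0 < θ)
    (x : ℝ → E) (V V' : ℝ → ℝ)
    (hVx : ∀ t ∈ Ico (0 : ℝ) Tp, M * ‖x t‖ ^ 2 ≤ V t)
    (hV : ∀ t ∈ Ico (0 : ℝ) Tp, HasDerivWithinAt V (V' t) (Ico 0 Tp) t)
    (hV' : ∀ t ∈ Ico (0 : ℝ) Tp, V' t ≤ -θ * (1 / cos (π * t / (2 * Tp)) ^ 2) * V t) :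
    Tendsto x (nhdsWithin Tp (Iio Tp)) (nhds 0) :=
  stmt2_general Tp hTp M θ hM hθ x V V' hVx hV hV'
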